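/- arXiv:2011.12316 — 2 statements merged into one kernel-verified Lean document; each statement's English description precedes it below -/
import Mathlib

section
/- Let θ : ℕ → ℕ be a sequence of positive integers such that θ i divides θ (i+1) for all i. Then for each k, the partial sum ∑_{i=0}^k 1/θ i can be written as u_k / θ k for some positive integer u_k, and if moreover θ i strictly divides θ (i+1) for all i, then u_k ≤ 2 * θ k. -/
/-- The numerator of `∑ i ≤ k, 1 / θ i` over the common denominator `θ k`, when each `θ i`
divides `θ (i + 1)`. -/
def chainNumerator (θ : ℕ → ℕ) : ℕ → ℕ
  | 0 => 1
  | k + 1 => chainNumerator θ k * (θ (k + 1) / θ k) + 1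

theorem chainNumerator_pos (θ : ℕ → ℕ) (k : ℕ) : 0 < chainNumerator θ k := by
  cases k <;> simp [chainNumerator]

theorem two_le_div_of_dvd_of_ne {a b : ℕ} (hab : a ∣ b) (hb : 0 < b) (hne : a ≠ b) :
    2 ≤ b / a := by
  obtain ⟨c, rfl⟩ := hab
  have ha : 0 < a := Nat.pos_of_mul_pos_right hb
  have hc : c ≠ 0 := by rintro rfl; simp at hb
  have hc' : c ≠ 1 := by rintro rfl; simp at hne
  rw [Nat.mul_div_cancel_left c ha]
  omega

section

variable {θ : ℕ → ℕ} (hpos : ∀ i, 0 < θ i) (hdvd : ∀ i, θ i ∣ θ (i + 1))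
include hpos hdvd

theorem sum_range_one_div_eq_chainNumerator_div {K : Type*} [Field K] [CharZero K] (k : ℕ) :
    ∑ i ∈ Finset.range (k + 1), (1 : K) / θ i = chainNumerator θ k / θ k := by
  induction k with
  | zero => simp [chainNumerator]
  | succ k ih =>
    obtain ⟨c, hc⟩ := hdvd k
    have hk : (θ k : K) ≠ 0 := by exact_mod_cast (hpos k).ne'
    have hc0 : (c : K) ≠ 0 := by
      have h := (hpos (k + 1)).ne'
      rw [hc] at h
      exact_mod_cast right_ne_zero_of_mul h
    rw [Finset.sum_range_succ, ih, chainNumerator, hc, Nat.mul_div_cancel_left c (hpos k)]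
    push_cast
    field_simp

theorem chainNumerator_lt_two_mul (hne : ∀ i, θ i ≠ θ (i + 1)) (k : ℕ) :
    chainNumerator θ k < 2 * θ k := by
  induction k with
  | zero => simp only [chainNumerator]; linarith [hpos 0]
  | succ k ih =>
    have h2 := two_le_div_of_dvd_of_ne (hdvd k) (hpos (k + 1)) (hne k)
    obtain ⟨c, hc⟩ := hdvd k
    rw [hc, Nat.mul_div_cancel_left c (hpos k)] at h2
    rw [chainNumerator, hc, Nat.mul_div_cancel_left c (hpos k)]
    -- `u * c + 1 ≤ (2 * θ k - 1) * c + 1 < 2 * θ k * c` because `c ≥ 2`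
    nlinarith

end

theorem partial_sum_num (θ : ℕ → ℕ)
    (hpos : ∀ i, 0 < θ i)
    (hdvd : ∀ i, θ i ∣ θ (i + 1)) (k : ℕ) :
    ∃ u : ℕ, 0 < u ∧
      (∑ i ∈ Finset.range (k + 1), (1 : ℚ) / θ i) = (u : ℚ) / θ k ∧
      ((∀ i, θ i ≠ θ (i + 1)) → u ≤ 2 * θ k) :=
  ⟨chainNumerator θ k, chainNumerator_pos θ k,
    sum_range_one_div_eq_chainNumerator_div hpos hdvd k,
    fun hne => (chainNumerator_lt_two_mul hpos hdvd hne k).le⟩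
end

section
/- Let R = ℂ[w,x,y,z] with homogeneous components R_d, let f ∈ R₄, and suppose Q₁₂ : R₁₂ → R₉⁴ is a linear map satisfying a = ∑_{i=0}^3 Q₁₂(a)_i ∂ᵢf for all a ∈ R₁₂. For d > 12 define Q_d : R_d → R_{d−3}⁴ recursively by writing a = ∑_{i=0}^3 xᵢ aᵢ with the four summands having pairwise disjoint monomial supports and setting Q_d(a) = ∑ᵢ xᵢ Q_{d−1}(aᵢ), where x₀,…,x₃ are the variables w,x,y,z. Then Q_d satisfies a = ∑ᵢ Q_d(a)_i ∂ᵢ f, and the operator norm of Q_d (with R_d given the 1-norm and R⁴ the sum of 1-norms) satisfies ‖Q_d‖ ≤ ‖Q₁₂‖ for all d ≥ 12. -/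
/-! Induction on `d`. If `a = ∑ᵢ xᵢ aᵢ` and each `aᵢ = ∑ⱼ Q_{d-1}(aᵢ)ⱼ ∂ⱼ f`, then
regrouping gives `a = ∑ⱼ (∑ᵢ xᵢ Q_{d-1}(aᵢ)ⱼ) ∂ⱼ f = ∑ⱼ Q_d(a)ⱼ ∂ⱼ f`. For the norm, multiplying by
a variable preserves the 1-norm and the triangle inequality gives
`∑ⱼ ‖Q_d(a)ⱼ‖₁ ≤ ∑ᵢ ∑ⱼ ‖Q_{d-1}(aᵢ)ⱼ‖₁ ≤ N ∑ᵢ ‖aᵢ‖₁`, while disjointness of the supports of the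
`xᵢ aᵢ` makes `∑ᵢ ‖aᵢ‖₁ = ‖a‖₁` an equality. -/

/-- The 1-norm of a multivariate polynomial: sum of absolute values of its coefficients. -/
noncomputable def norm1 (f : MvPolynomial (Fin 4) ℂ) : ℝ :=
  ∑ β ∈ f.support, ‖f.coeff β‖

open MvPolynomial Finset

lemma norm1_eq_sum_of_support_subset (f : MvPolynomial (Fin 4) ℂ) {s : Finset (Fin 4 →₀ ℕ)}
    (h : f.support ⊆ s) : norm1 f = ∑ β ∈ s, ‖f.coeff β‖ :=
  sum_subset h fun β _ hβ => by rw [notMem_support_iff.mp hβ, norm_zero]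

lemma norm1_zero : norm1 0 = 0 := by
  simp [norm1]

lemma norm1_add_le (p q : MvPolynomial (Fin 4) ℂ) : norm1 (p + q) ≤ norm1 p + norm1 q := by
  classical
  rw [norm1_eq_sum_of_support_subset (p + q) support_add,
    norm1_eq_sum_of_support_subset p subset_union_left,
    norm1_eq_sum_of_support_subset q subset_union_right, ← sum_add_distrib]
  exact sum_le_sum fun β _ => by simpa only [coeff_add] using norm_add_le _ _

lemma norm1_add_of_disjoint {p q : MvPolynomial (Fin 4) ℂ} (h : Disjoint p.support q.support) :
    norm1 (p + q) = norm1 p + norm1 q :=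
  Finsupp.sum_add_index_of_disjoint h _

lemma norm1_sum_le {ι : Type*} (s : Finset ι) (p : ι → MvPolynomial (Fin 4) ℂ) :
    norm1 (∑ i ∈ s, p i) ≤ ∑ i ∈ s, norm1 (p i) :=
  le_sum_of_subadditive norm1 norm1_zero.le norm1_add_le s p

lemma norm1_sum_of_pairwise_disjoint {ι : Type*} (s : Finset ι) (p : ι → MvPolynomial (Fin 4) ℂ)
    (h : (s : Set ι).Pairwise fun i j => Disjoint (p i).support (p j).support) :
    norm1 (∑ i ∈ s, p i) = ∑ i ∈ s, norm1 (p i) := by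
  classical
  induction s using Finset.induction with
  | empty => simp [norm1_zero]
  | insert k s hk ih =>
    rw [coe_insert, Set.pairwise_insert] at h
    rw [sum_insert hk, sum_insert hk, norm1_add_of_disjoint, ih h.1]
    refine disjoint_left.mpr fun β hβk hβs => ?_
    obtain ⟨i, hi, hβi⟩ := mem_biUnion.mp (support_sum hβs)
    exact disjoint_left.mp ((h.2 i hi fun e => hk (e ▸ hi)).1) hβk hβi

lemma norm1_X_mul (i : Fin 4) (p : MvPolynomial (Fin 4) ℂ) : norm1 (X i * p) = norm1 p := by
  rw [norm1, norm1, support_X_mul, sum_map]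
  exact sum_congr rfl fun β _ => by rw [addLeftEmbedding_apply, coeff_X_mul]

lemma norm1_sum_X_mul_of_pairwise_disjoint (b : Fin 4 → MvPolynomial (Fin 4) ℂ)
    (h : Set.univ.Pairwise fun i j : Fin 4 => Disjoint (X i * b i).support (X j * b j).support) :
    norm1 (∑ i, X i * b i) = ∑ i, norm1 (b i) := by
  rw [norm1_sum_of_pairwise_disjoint _ _ (by simpa using h)]
  exact sum_congr rfl fun i _ => norm1_X_mul i (b i)

lemma sum_norm1_sum_X_mul_le {κ : Type*} (t : Finset κ) (q : Fin 4 → κ → MvPolynomial (Fin 4) ℂ) :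
    ∑ j ∈ t, norm1 (∑ i, X i * q i j) ≤ ∑ i, ∑ j ∈ t, norm1 (q i j) := by
  rw [sum_comm]
  refine sum_le_sum fun j _ => (norm1_sum_le _ _).trans_eq ?_
  exact sum_congr rfl fun i _ => norm1_X_mul i (q i j)

theorem Finset.sum_mul_sum_mul_eq_sum_sum_mul {R ι κ : Type*} [CommSemiring R] (s : Finset ι)
    (t : Finset κ) (x : ι → R) (q : ι → κ → R) (g : κ → R) :
    ∑ i ∈ s, x i * ∑ j ∈ t, q i j * g j = ∑ j ∈ t, (∑ i ∈ s, x i * q i j) * g j := by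
  simp_rw [mul_sum, sum_mul, mul_assoc]
  exact sum_comm

theorem division_map_norm_bound_general
    (f : MvPolynomial (Fin 4) ℂ)
    (Q : ℕ → MvPolynomial (Fin 4) ℂ → Fin 4 → MvPolynomial (Fin 4) ℂ)
    (hbase : ∀ a : MvPolynomial (Fin 4) ℂ, a.IsHomogeneous 12 →
      a = ∑ i, Q 12 a i * MvPolynomial.pderiv i f)
    (N : ℝ) (hN : ∀ a : MvPolynomial (Fin 4) ℂ, a.IsHomogeneous 12 →
      ∑ j, norm1 (Q 12 a j) ≤ N * norm1 a)
    (hrec : ∀ d, 12 < d → ∀ a : MvPolynomial (Fin 4) ℂ, a.IsHomogeneous d →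
      ∃ b : Fin 4 → MvPolynomial (Fin 4) ℂ,
        (∀ i, (b i).IsHomogeneous (d - 1)) ∧
        a = ∑ i, MvPolynomial.X i * b i ∧
        (Set.univ.Pairwise fun i j : Fin 4 =>
          Disjoint (MvPolynomial.X i * b i).support (MvPolynomial.X j * b j).support) ∧
        (∀ j, Q d a j = ∑ i, MvPolynomial.X i * Q (d - 1) (b i) j)) :
    ∀ d, 12 ≤ d → ∀ a : MvPolynomial (Fin 4) ℂ, a.IsHomogeneous d →
      (a = ∑ i, Q d a i * MvPolynomial.pderiv i f) ∧
      ∑ j, norm1 (Q d a j) ≤ N * norm1 a := by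
  intro d hd
  induction d, hd using Nat.le_induction with
  | base => exact fun a ha => ⟨hbase a ha, hN a ha⟩
  | succ d hd ih =>
    intro a ha
    obtain ⟨b, hb, hab, hdisj, hQ⟩ := hrec (d + 1) (by omega) a ha
    simp only [Nat.add_sub_cancel] at hb hQ
    choose hdiv hbound using fun i => ih (b i) (hb i)
    constructor
    · calc a = ∑ i, X i * ∑ j, Q d (b i) j * pderiv j f := by
            rw [hab]
            exact sum_congr rfl fun i _ => by rw [← hdiv i]
        _ = ∑ j, Q (d + 1) a j * pderiv j f := by
            simp only [sum_mul_sum_mul_eq_sum_sum_mul, hQ]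
    · calc ∑ j, norm1 (Q (d + 1) a j) = ∑ j, norm1 (∑ i, X i * Q d (b i) j) := by simp only [hQ]
        _ ≤ ∑ i, ∑ j, norm1 (Q d (b i) j) := sum_norm1_sum_X_mul_le _ _
        _ ≤ ∑ i, N * norm1 (b i) := sum_le_sum fun i _ => hbound i
        _ = N * norm1 a := by rw [← mul_sum, hab, norm1_sum_X_mul_of_pairwise_disjoint b hdisj]

theorem division_map_norm_bound
    (f : MvPolynomial (Fin 4) ℂ) (hf : f.IsHomogeneous 4)
    (Q : ℕ → MvPolynomial (Fin 4) ℂ → Fin 4 → MvPolynomial (Fin 4) ℂ)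
    (hlin : ∀ d j, IsLinearMap ℂ fun a => Q d a j)
    (hbase : ∀ a : MvPolynomial (Fin 4) ℂ, a.IsHomogeneous 12 →
      a = ∑ i, Q 12 a i * MvPolynomial.pderiv i f)
    (N : ℝ) (hN : ∀ a : MvPolynomial (Fin 4) ℂ, a.IsHomogeneous 12 →
      ∑ j, norm1 (Q 12 a j) ≤ N * norm1 a)
    (hrec : ∀ d, 12 < d → ∀ a : MvPolynomial (Fin 4) ℂ, a.IsHomogeneous d →
      ∃ b : Fin 4 → MvPolynomial (Fin 4) ℂ,
        (∀ i, (b i).IsHomogeneous (d - 1)) ∧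
        a = ∑ i, MvPolynomial.X i * b i ∧
        (Set.univ.Pairwise fun i j : Fin 4 =>
          Disjoint (MvPolynomial.X i * b i).support (MvPolynomial.X j * b j).support) ∧
        (∀ j, Q d a j = ∑ i, MvPolynomial.X i * Q (d - 1) (b i) j)) :
    ∀ d, 12 ≤ d → ∀ a : MvPolynomial (Fin 4) ℂ, a.IsHomogeneous d →
      (a = ∑ i, Q d a i * MvPolynomial.pderiv i f) ∧
      ∑ j, norm1 (Q d a j) ≤ N * norm1 a :=
  division_map_norm_bound_general f Q hbase N hN hrec
end
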